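/- Let B be a left semi-brace. Then B^(n) is an ideal of B, for every positive integer n. -/
import Mathlib


/-- A left semi-brace: `(B,+)` is a left cancellative semigroup, `(B,*)` is a group
(whose identity `1` plays the role of `0` in the additive notation of the paper, and
`a⁻¹` plays the role of `a⁻`), and `a ∘ (b + c) = a ∘ b + a ∘ (a⁻ + c)` holds. -/
class LeftSemiBrace (B : Type*) extends Group B, Add B where
  add_assoc : ∀ a b c : B, a + b + c = a + (b + c)
  add_left_cancel : ∀ a b c : B, a + b = a + c → b = c
  circ_add : ∀ a b c : B, a * (b + c) = a * b + a * (a⁻¹ + c)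

namespace LeftSemiBrace

variable {B : Type*} [LeftSemiBrace B]

/-- The set `E` of additive idempotents. -/
def E (B : Type*) [LeftSemiBrace B] : Set B := {e | e + e = e}

/-- The set `G = B + 0`. -/
def G (B : Type*) [LeftSemiBrace B] : Set B := {x | ∃ b : B, x = b + 1}

/-- `λ_a (b) = a ∘ (a⁻ + b)`. -/
def lam (a b : B) : B := a * (a⁻¹ + b)

/-- `ρ_b (a) = (a⁻ + b)⁻ ∘ b`. -/
def rho (b a : B) : B := (a⁻¹ + b)⁻¹ * b

/-- `a · b = λ_a(a⁻) + a ∘ b + λ_b(b⁻)`. -/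
def dot (a b : B) : B := lam a a⁻¹ + a * b + lam b b⁻¹

/-- The group part `g_b = b + 0` of an element `b`. -/
def gp (b : B) : B := b + 1

/-- The additive inverse (within the group `(G,+)`) of the group part of an element:
for `g ∈ G` one has `neg g = -g`, since `-g_a = λ_a(a⁻) = a ∘ (a⁻ + a⁻)`. -/
def neg (a : B) : B := a * (a⁻¹ + a⁻¹)

/-- The idempotent part `e_b = -g_b + b` of an element `b`. -/
def ep (b : B) : B := neg (gp b) + b

/-- `S` is a subsemigroup of `(B,+)`. -/
def IsAddSubsemigroup (S : Set B) : Prop := ∀ x ∈ S, ∀ y ∈ S, x + y ∈ S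

/-- `S` is a subgroup of the multiplicative group `(B,∘)`. -/
def IsCircSubgroup (S : Set B) : Prop :=
  (1 : B) ∈ S ∧ (∀ x ∈ S, ∀ y ∈ S, x * y ∈ S) ∧ ∀ x ∈ S, x⁻¹ ∈ S

/-- `S` is a normal subgroup of the multiplicative group `(B,∘)`. -/
def IsCircNormal (S : Set B) : Prop :=
  IsCircSubgroup S ∧ ∀ x ∈ S, ∀ b : B, b * x * b⁻¹ ∈ S

/-- `S` is a subgroup of the group `(G,+)`. -/
def IsAddSubgroupOfG (S : Set B) : Prop :=
  S ⊆ G B ∧ (1 : B) ∈ S ∧ (∀ x ∈ S, ∀ y ∈ S, x + y ∈ S) ∧ ∀ x ∈ S, neg x ∈ S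

/-- `S` is a normal subgroup of the group `(G,+)`. -/
def IsAddNormalSubgroupOfG (S : Set B) : Prop :=
  IsAddSubgroupOfG S ∧ ∀ g ∈ G B, ∀ x ∈ S, g + x + neg g ∈ S

/-- `I` is an ideal of the left semi-brace `B` (Definition 17 of Catino–Colazzo–Stefanelli):
`I` is a subsemigroup of `(B,+)`, a normal subgroup of `(B,∘)`, `I ∩ G` is a normal
subgroup of `(G,+)`, `ρ_b(n) ∈ I` for all `b ∈ B`, `n ∈ I ∩ G`, and `λ_g(e) ∈ I` for all
`g ∈ G`, `e ∈ I ∩ E`. -/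
def IsIdeal (I : Set B) : Prop :=
  IsAddSubsemigroup I ∧ IsCircNormal I ∧ IsAddNormalSubgroupOfG (I ∩ G B) ∧
    (∀ b : B, ∀ n ∈ I ∩ G B, rho b n ∈ I) ∧
    (∀ g ∈ G B, ∀ e ∈ I ∩ E B, lam g e ∈ I)

/-- `I` is a left ideal of the left semi-brace `B`. -/
def IsLeftIdeal (I : Set B) : Prop :=
  (∀ x ∈ I, x + 1 ∈ I) ∧ IsAddSubgroupOfG (I ∩ G B) ∧
    (∀ g ∈ G B, ∀ x ∈ I, lam g x ∈ I) ∧ IsCircSubgroup I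

/-- The subgroup of `(G,+)` generated by a subset `S` of `G`. -/
def addClosure (S : Set B) : Set B :=
  ⋂₀ {T : Set B | S ⊆ T ∧ (1 : B) ∈ T ∧ (∀ x ∈ T, ∀ y ∈ T, x + y ∈ T) ∧ ∀ x ∈ T, neg x ∈ T}

/-- `X · Y`: the subgroup of `(G,+)` generated by `{x · y : x ∈ X, y ∈ Y}`. -/
def dotSet (X Y : Set B) : Set B := addClosure {z | ∃ x ∈ X, ∃ y ∈ Y, z = dot x y}

/-- `S + E = {s + e : s ∈ S, e ∈ E}`. -/
def addE (S : Set B) : Set B := {z | ∃ s ∈ S, ∃ e ∈ E B, z = s + e}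

/-- The right series of `B`: `rightSeries B n = B^(n+1)`, where `B^(1) = B` and
`B^(n+1) = B^(n) · B + E`. -/
def rightSeries (B : Type*) [LeftSemiBrace B] : ℕ → Set B
  | 0 => Set.univ
  | n + 1 => addE (dotSet (rightSeries B n) Set.univ)

/-- The left series of `B`: `leftSeries B n = B^(n+1)`, where `B^1 = B` and
`B^(n+1) = B · B^n + E`. -/
def leftSeries (B : Type*) [LeftSemiBrace B] : ℕ → Set B
  | 0 => Set.univ
  | n + 1 => addE (dotSet Set.univ (leftSeries B n))

/-- The right series of the skew left brace `G`: `rightSeriesG B n = G^(n+1)`, where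
`G^(1) = G` and `G^(n+1) = G^(n) · G`. -/
def rightSeriesG (B : Type*) [LeftSemiBrace B] : ℕ → Set B
  | 0 => G B
  | n + 1 => dotSet (rightSeriesG B n) (G B)

/-- The series `bracketSeries B n = B^[n+1]`, where `B^[1] = B` and `B^[n+1] = H_n + E`
with `H_n` the subgroup of `(G,+)` generated by `⋃_{i=1}^{n} B^[i] · B^[n+1-i]`. -/
def bracketSeries (B : Type*) [LeftSemiBrace B] : ℕ → Set B
  | 0 => Set.univ
  | n + 1 =>
      addE (addClosure (⋃ i : Fin (n + 1),
        dotSet (bracketSeries B i.1) (bracketSeries B (n - i.1))))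
  decreasing_by
  · exact i.isLt
  · exact Nat.lt_succ_of_le (Nat.sub_le n i.1)

/-- The socle `Soc(B) = {a ∈ B : ρ_a = ρ_0, λ_a = λ_0}`. -/
def Soc (B : Type*) [LeftSemiBrace B] : Set B :=
  {a | rho a = rho (1 : B) ∧ lam a = lam (1 : B)}

/-- The generalized socle `Zoc(B) = Soc(B) + E`. -/
def Zoc (B : Type*) [LeftSemiBrace B] : Set B :=
  {z | ∃ a ∈ Soc B, ∃ e ∈ E B, z = a + e}

/-- The lower central series of the group `(G,+)`:  `γ_1 = G` and `γ_{n+1}` is the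
subgroup of `(G,+)` generated by the additive commutators `-x - y + x + y` with
`x ∈ γ_n`, `y ∈ G`. -/
def lowerCentralSeriesG (B : Type*) [LeftSemiBrace B] : ℕ → Set B
  | 0 => G B
  | n + 1 => addClosure
      {z | ∃ x ∈ lowerCentralSeriesG B n, ∃ y ∈ G B, z = neg x + neg y + x + y}

/-- The group `(G,+)` is nilpotent. -/
def IsNilpotentGAdd (B : Type*) [LeftSemiBrace B] : Prop :=
  ∃ n : ℕ, lowerCentralSeriesG B n = {(1 : B)}

/-! ### Auxiliary lemmas -/

private lemma aa (a b c : B) : a + b + c = a + (b + c) :=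
  LeftSemiBrace.add_assoc a b c

private lemma lc {a b c : B} (h : a + b = a + c) : b = c :=
  LeftSemiBrace.add_left_cancel a b c h

lemma one_add' (b : B) : (1 : B) + b = b := by
  have h := circ_add (1 : B) 1 b
  simp only [one_mul, inv_one] at h
  exact (lc h).symm

lemma lam_add (a x y : B) : lam a (x + y) = lam a x + lam a y := by
  show a * (a⁻¹ + (x + y)) = a * (a⁻¹ + x) + a * (a⁻¹ + y)
  rw [← aa, circ_add]

lemma lam_lam (a b c : B) : lam a (lam b c) = lam (a * b) c := by
  show a * (a⁻¹ + b * (b⁻¹ + c)) = (a * b) * ((a * b)⁻¹ + c)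
  rw [mul_inv_rev, mul_assoc, circ_add b (b⁻¹ * a⁻¹) c, mul_inv_cancel_left]

lemma lam_one (c : B) : lam 1 c = c := by
  show (1 : B) * (1⁻¹ + c) = c
  rw [inv_one, one_mul, one_add']

lemma mul_lam_inv (a b : B) : a * lam a⁻¹ b = a + b := by
  show a * (a⁻¹ * (a⁻¹⁻¹ + b)) = a + b
  rw [inv_inv, mul_inv_cancel_left]

lemma mul_eq_add_lam (a b : B) : a * b = a + lam a b := by
  have h := mul_lam_inv a (lam a b)
  rwa [lam_lam, inv_mul_cancel, lam_one] at h

lemma neg_eq_lam (a : B) : neg a = lam a a⁻¹ := rfl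

lemma add_neg' (a : B) : a + neg a = 1 := by
  rw [neg_eq_lam, ← mul_eq_add_lam, mul_inv_cancel]

lemma one_add_one' : (1 : B) + 1 = 1 := one_add' 1

lemma neg_add_one' (a : B) : neg a + 1 = neg a := by
  have h : a + (neg a + 1) = a + neg a := by
    rw [← aa, add_neg', one_add_one']
  exact lc h

lemma mem_G_iff {x : B} : x ∈ G B ↔ x + 1 = x := by
  constructor
  · rintro ⟨b, rfl⟩
    rw [aa, one_add_one']
  · intro h; exact ⟨x, h.symm⟩

lemma neg_mem_G (a : B) : neg a ∈ G B := mem_G_iff.2 (neg_add_one' a)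

lemma mem_E_iff {e : B} : e ∈ E B ↔ e + e = e := Iff.rfl

lemma E_add_one {e : B} (he : e ∈ E B) : e + 1 = 1 := by
  have h : e + (e + 1) = e + 1 := by rw [← aa, mem_E_iff.1 he]
  exact lc h

lemma one_mem_E : (1 : B) ∈ E B := one_add_one'

lemma gp_add_left (a x : B) : gp a + x = a + x := by
  show a + 1 + x = a + x
  rw [aa, one_add']

lemma gp_add (x y : B) : gp (x + y) = gp x + gp y := by
  show x + y + 1 = gp x + gp y
  rw [gp_add_left, aa]; rfl

lemma gp_mem_G (b : B) : gp b ∈ G B := ⟨b, rfl⟩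

lemma G_gp {x : B} (h : x ∈ G B) : gp x = x := mem_G_iff.1 h

lemma gp_gp (b : B) : gp (gp b) = gp b := G_gp (gp_mem_G b)

lemma E_gp {e : B} (he : e ∈ E B) : gp e = 1 := E_add_one he

lemma one_mem_G : (1 : B) ∈ G B := ⟨1, one_add_one'.symm⟩

lemma gp_one : gp (1 : B) = 1 := one_add_one'

lemma G_add_one {x : B} (h : x ∈ G B) : x + 1 = x := mem_G_iff.1 h

lemma G_add_mem {g h : B} (hg : g ∈ G B) (hh : h ∈ G B) : g + h ∈ G B :=
  mem_G_iff.2 (by rw [aa, G_add_one hh])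

lemma neg_gp (a : B) : neg (gp a) = neg a := by
  have h : gp a + neg (gp a) = gp a + neg a := by
    rw [add_neg', gp_add_left, add_neg']
  exact lc h

lemma neg_add' {g : B} (hg : g ∈ G B) : neg g + g = 1 := by
  have hE : (neg g + g) ∈ E B := by
    show neg g + g + (neg g + g) = neg g + g
    rw [aa, ← aa g, add_neg', one_add']
  have hG : (neg g + g) ∈ G B := G_add_mem (neg_mem_G g) hg
  rw [← G_add_one hG, E_add_one hE]

lemma neg_neg' {g : B} (hg : g ∈ G B) : neg (neg g) = g := by
  have h : neg g + neg (neg g) = neg g + g := by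
    rw [add_neg', neg_add' hg]
  exact lc h

lemma neg_add_rev' {g h : B} (hg : g ∈ G B) (hh : h ∈ G B) :
    neg (g + h) = neg h + neg g := by
  refine lc (a := g + h) ?_
  rw [add_neg', aa, ← aa h, add_neg', one_add', add_neg']

lemma neg_add_cancel_left' {g : B} (hg : g ∈ G B) (x : B) :
    neg g + (g + x) = x := by
  rw [← aa, neg_add' hg, one_add']

lemma add_neg_cancel_left' (a x : B) : a + (neg a + x) = x := by
  rw [← aa, add_neg', one_add']

lemma ep_mem_E (b : B) : ep b ∈ E B := by
  show neg (gp b) + b + (neg (gp b) + b) = neg (gp b) + b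
  rw [neg_gp, aa, ← aa b, add_neg', one_add']

lemma gp_ep (b : B) : gp b + ep b = b := by
  show gp b + (neg (gp b) + b) = b
  rw [← aa, add_neg', one_add']

lemma lam_E {e : B} (he : e ∈ E B) (a : B) : lam a e ∈ E B := by
  show lam a e + lam a e = lam a e
  rw [← lam_add, mem_E_iff.1 he]

/-- `μ_a(x) := g_{λ_a(x)}`, the `G`-part of `λ_a(x)`. -/
def mu (a x : B) : B := gp (lam a x)

lemma mu_mem_G (a x : B) : mu a x ∈ G B := gp_mem_G _

lemma gp_lam (a b : B) : gp (lam a b) = mu a (gp b) := by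
  conv_lhs => rw [← gp_ep b]
  rw [lam_add, gp_add, E_gp (lam_E (ep_mem_E b) a)]
  show mu a (gp b) + 1 = mu a (gp b)
  exact G_add_one (mu_mem_G a (gp b))

lemma mu_add (a x y : B) : mu a (x + y) = mu a x + mu a y := by
  show gp (lam a (x + y)) = _
  rw [lam_add, gp_add]; rfl

lemma mu_one (a : B) : mu a 1 = 1 := E_gp (lam_E one_mem_E a)

lemma mu_mul (a b x : B) : mu (a * b) x = mu a (mu b x) := by
  show gp (lam (a * b) x) = _
  rw [← lam_lam]
  exact gp_lam a (lam b x)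

lemma mu_one_left (x : B) : mu 1 x = gp x := by
  show gp (lam 1 x) = gp x
  rw [lam_one]

lemma mu_neg (a x : B) : mu a (neg x) = neg (mu a x) := by
  refine lc (a := mu a x) ?_
  rw [← mu_add, add_neg', mu_one, add_neg']

lemma gp_mul (a b : B) : gp (a * b) = gp a + mu a (gp b) := by
  rw [mul_eq_add_lam, gp_add, gp_lam]

lemma mu_gp_inv (a : B) : mu a (gp a⁻¹) = neg (gp a) := by
  refine lc (a := gp a) ?_
  rw [← gp_mul, mul_inv_cancel, gp_one, add_neg']

lemma gp_inv (a : B) : gp a⁻¹ = mu a⁻¹ (neg (gp a)) := by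
  rw [← mu_gp_inv a, ← mu_mul, inv_mul_cancel, mu_one_left, gp_gp]

lemma dot_eq (a b : B) : dot a b = mu a (gp b) + neg (gp b) := by
  show neg a + a * b + neg b = mu a (gp b) + neg (gp b)
  rw [mul_eq_add_lam a b, aa, ← neg_gp a, aa a (lam a b) (neg b),
    ← gp_add_left a (lam a b + neg b),
    neg_add_cancel_left' (gp_mem_G a) (lam a b + neg b), ← neg_gp b,
    ← gp_add_left (lam a b) (neg (gp b)), gp_lam]

lemma dot_mem_G (a b : B) : dot a b ∈ G B := by
  rw [dot_eq]; exact G_add_mem (mu_mem_G _ _) (neg_mem_G _)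

lemma mu_eq_dot_add (a b : B) : mu a (gp b) = dot a b + gp b := by
  rw [dot_eq, aa, neg_add' (gp_mem_G b), G_add_one (mu_mem_G a (gp b))]

lemma conj_dot {g : B} (hg : g ∈ G B) (x b : B) :
    g + dot x b + neg g = neg (dot x g) + dot x (g + b) := by
  have h1 : gp (g + b) = g + gp b := by rw [gp_add, G_gp hg]
  rw [dot_eq x (g + b), dot_eq x b, dot_eq x g, G_gp hg, h1, mu_add,
    neg_add_rev' (mu_mem_G x g) (neg_mem_G g), neg_neg' hg,
    neg_add_rev' hg (gp_mem_G b)]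
  rw [aa g, aa (mu x g), aa (mu x (gp b)), aa g,
    neg_add_cancel_left' (mu_mem_G x g)]

/-! ### `addClosure` lemmas -/

lemma subset_addClosure (S : Set B) : S ⊆ addClosure S := fun x hx =>
  Set.mem_sInter.2 fun _ hT => hT.1 hx

lemma addClosure_subset {S T : Set B} (h1 : S ⊆ T) (h2 : (1 : B) ∈ T)
    (h3 : ∀ x ∈ T, ∀ y ∈ T, x + y ∈ T) (h4 : ∀ x ∈ T, neg x ∈ T) :
    addClosure S ⊆ T := fun x hx => Set.mem_sInter.1 hx T ⟨h1, h2, h3, h4⟩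

lemma one_mem_addClosure (S : Set B) : (1 : B) ∈ addClosure S :=
  Set.mem_sInter.2 fun _ hT => hT.2.1

lemma add_mem_addClosure {S : Set B} {x y : B} (hx : x ∈ addClosure S)
    (hy : y ∈ addClosure S) : x + y ∈ addClosure S :=
  Set.mem_sInter.2 fun T hT =>
    hT.2.2.1 x (Set.mem_sInter.1 hx T hT) y (Set.mem_sInter.1 hy T hT)

lemma neg_mem_addClosure {S : Set B} {x : B} (hx : x ∈ addClosure S) :
    neg x ∈ addClosure S :=
  Set.mem_sInter.2 fun T hT => hT.2.2.2 x (Set.mem_sInter.1 hx T hT)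

lemma addClosure_mono {S S' : Set B} (h : S ⊆ S') : addClosure S ⊆ addClosure S' :=
  fun x hx => Set.mem_sInter.2 fun T hT => Set.mem_sInter.1 hx T ⟨h.trans hT.1, hT.2⟩

lemma addClosure_sub_G {S : Set B} (h : S ⊆ G B) : addClosure S ⊆ G B :=
  addClosure_subset h one_mem_G (fun _ hx _ hy => G_add_mem hx hy)
    (fun x _ => neg_mem_G x)

/-! ### Lemmas about `H = I · B` -/

lemma dot_mem_dotSet {I : Set B} {x : B} (hx : x ∈ I) (b : B) :
    dot x b ∈ dotSet I Set.univ :=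
  subset_addClosure _ ⟨x, hx, b, Set.mem_univ b, rfl⟩

lemma dotSet_sub_G (I : Set B) : dotSet I Set.univ ⊆ G B :=
  addClosure_sub_G (by rintro z ⟨x, -, y, -, rfl⟩; exact dot_mem_G x y)

lemma dotSet_normal (I : Set B) :
    ∀ h ∈ dotSet I Set.univ, ∀ g ∈ G B, g + h + neg g ∈ dotSet I Set.univ := by
  set H := dotSet I Set.univ with hH
  have hHG : H ⊆ G B := dotSet_sub_G I
  intro h hh
  have key : h ∈ {h | h ∈ H ∧ ∀ g ∈ G B, g + h + neg g ∈ H} := by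
    refine addClosure_subset ?_ ?_ ?_ ?_ hh
    · rintro z ⟨x, hx, b, -, rfl⟩
      refine ⟨dot_mem_dotSet hx b, fun g hg => ?_⟩
      rw [conj_dot hg x b]
      exact add_mem_addClosure (neg_mem_addClosure (dot_mem_dotSet hx g))
        (dot_mem_dotSet hx (g + b))
    · refine ⟨one_mem_addClosure _, fun g hg => ?_⟩
      rw [G_add_one hg, add_neg']
      exact one_mem_addClosure _
    · rintro x ⟨hxH, hx⟩ y ⟨hyH, hy⟩
      refine ⟨add_mem_addClosure hxH hyH, fun g hg => ?_⟩
      have h1 : g + (x + y) + neg g = (g + x + neg g) + (g + y + neg g) := by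
        rw [aa (g + x) (neg g), aa g y (neg g), neg_add_cancel_left' hg (y + neg g),
          aa g (x + y) (neg g), aa x y (neg g), ← aa g x (y + neg g)]
      rw [h1]
      exact add_mem_addClosure (hx g hg) (hy g hg)
    · rintro x ⟨hxH, hx⟩
      refine ⟨neg_mem_addClosure hxH, fun g hg => ?_⟩
      have h1 : g + neg x + neg g = neg (g + x + neg g) := by
        rw [neg_add_rev' (G_add_mem hg (hHG hxH)) (neg_mem_G g), neg_neg' hg,
          neg_add_rev' hg (hHG hxH), ← aa]
      rw [h1]
      exact neg_mem_addClosure (hx g hg)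
  exact key.2

lemma mu_dotSet {I : Set B} (hI : IsIdeal I) :
    ∀ h ∈ dotSet I Set.univ, ∀ b : B, mu b h ∈ dotSet I Set.univ := by
  set H := dotSet I Set.univ with hH
  intro h hh
  have key : h ∈ {h | h ∈ H ∧ ∀ b : B, mu b h ∈ H} := by
    refine addClosure_subset ?_ ?_ ?_ ?_ hh
    · rintro z ⟨x, hx, c, -, rfl⟩
      refine ⟨dot_mem_dotSet hx c, fun b => ?_⟩
      have hy : b * x * b⁻¹ ∈ I := hI.2.1.2 x hx b
      have hkey : mu b (dot x c) = dot (b * x * b⁻¹) (mu b (gp c)) := by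
        rw [dot_eq x c, mu_add, mu_neg, dot_eq, G_gp (mu_mem_G b (gp c)),
          ← mu_mul, ← mu_mul]
        have : b * x * b⁻¹ * b = b * x := inv_mul_cancel_right (b * x) b
        rw [this]
      rw [hkey]
      exact dot_mem_dotSet hy (mu b (gp c))
    · exact ⟨one_mem_addClosure _, fun b => by rw [mu_one]; exact one_mem_addClosure _⟩
    · rintro x ⟨hxH, hx⟩ y ⟨hyH, hy⟩
      exact ⟨add_mem_addClosure hxH hyH, fun b => by
        rw [mu_add]; exact add_mem_addClosure (hx b) (hy b)⟩
    · rintro x ⟨hxH, hx⟩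
      exact ⟨neg_mem_addClosure hxH, fun b => by
        rw [mu_neg]; exact neg_mem_addClosure (hx b)⟩
  exact key.2

lemma mem_addE_iff {H : Set B} (hHG : H ⊆ G B) {x : B} :
    x ∈ addE H ↔ gp x ∈ H := by
  constructor
  · rintro ⟨s, hs, e, he, rfl⟩
    rw [gp_add, E_gp he, G_add_one (gp_mem_G s), G_gp (hHG hs)]
    exact hs
  · intro h
    exact ⟨gp x, h, ep x, ep_mem_E x, (gp_ep x).symm⟩

lemma addE_mono {S S' : Set B} (h : S ⊆ S') : addE S ⊆ addE S' := by
  rintro z ⟨s, hs, e, he, rfl⟩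
  exact ⟨s, h hs, e, he, rfl⟩

lemma dotSet_mono_left {X X' Y : Set B} (h : X ⊆ X') : dotSet X Y ⊆ dotSet X' Y :=
  addClosure_mono (by rintro z ⟨x, hx, y, hy, rfl⟩; exact ⟨x, h hx, y, hy, rfl⟩)

lemma isIdeal_univ : IsIdeal (Set.univ : Set B) := by
  refine ⟨fun _ _ _ _ => trivial,
    ⟨⟨trivial, fun _ _ _ _ => trivial, fun _ _ => trivial⟩, fun _ _ _ => trivial⟩,
    ?_, fun _ _ _ => trivial, fun _ _ _ _ => trivial⟩
  rw [Set.univ_inter]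
  exact ⟨⟨subset_rfl, one_mem_G, fun _ hx _ hy => G_add_mem hx hy,
    fun x _ => neg_mem_G x⟩,
    fun g hg x hx => G_add_mem (G_add_mem hg hx) (neg_mem_G g)⟩

lemma isIdeal_step {I : Set B} (hI : IsIdeal I)
    (hsub : addE (dotSet I Set.univ) ⊆ I) :
    IsIdeal (addE (dotSet I Set.univ)) := by
  set H := dotSet I Set.univ with hH
  have hHG : H ⊆ G B := dotSet_sub_G I
  have memJ : ∀ {x : B}, x ∈ addE H ↔ gp x ∈ H := fun {x} => mem_addE_iff hHG
  have hnorm := dotSet_normal I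
  have hmu := mu_dotSet hI
  have h1H : (1 : B) ∈ H := one_mem_addClosure _
  have hHsubJ : H ⊆ addE H := fun h hh => memJ.2 (by rw [G_gp (hHG hh)]; exact hh)
  have hJG : addE H ∩ G B = H := by
    ext x
    constructor
    · rintro ⟨hxJ, hxG⟩
      have := memJ.1 hxJ
      rwa [G_gp hxG] at this
    · intro hx
      exact ⟨hHsubJ hx, hHG hx⟩
  have hginvH : ∀ {n : B}, n ∈ H → gp n⁻¹ ∈ H := by
    intro n hn
    rw [gp_inv, G_gp (hHG hn)]
    exact hmu _ (neg_mem_addClosure hn) _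
  refine ⟨?_, ⟨⟨?_, ?_, ?_⟩, ?_⟩, ?_, ?_, ?_⟩
  · -- add subsemigroup
    intro x hx y hy
    rw [memJ] at hx hy ⊢
    rw [gp_add]
    exact add_mem_addClosure hx hy
  · -- 1 ∈ J
    rw [memJ, gp_one]; exact h1H
  · -- mul closed
    intro x hx y hy
    rw [memJ] at hx hy ⊢
    rw [gp_mul]
    exact add_mem_addClosure hx (hmu _ hy x)
  · -- inv closed
    intro x hx
    rw [memJ] at hx ⊢
    rw [gp_inv]
    exact hmu _ (neg_mem_addClosure hx) _
  · -- circ normal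
    intro x hx b
    have hxI : x ∈ I := hsub hx
    rw [memJ] at hx ⊢
    have hkey : gp (b * x * b⁻¹)
        = gp b + (mu b (gp x) + mu b (dot x b⁻¹)) + neg (gp b) := by
      rw [mul_assoc, gp_mul, gp_mul, mu_add, mu_eq_dot_add x b⁻¹, mu_add, mu_gp_inv,
        aa (gp b) (mu b (gp x) + mu b (dot x b⁻¹)) (neg (gp b)),
        aa (mu b (gp x)) (mu b (dot x b⁻¹)) (neg (gp b))]
    rw [hkey]
    exact hnorm _ (add_mem_addClosure (hmu _ hx b)
      (hmu _ (dot_mem_dotSet hxI b⁻¹) b)) _ (gp_mem_G b)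
  · -- I ∩ G normal subgroup of (G,+)
    rw [hJG]
    exact ⟨⟨hHG, h1H, fun _ hx _ hy => add_mem_addClosure hx hy,
      fun _ hx => neg_mem_addClosure hx⟩,
      fun g hg x hx => hnorm x hx g hg⟩
  · -- rho condition
    intro b n hn
    rw [hJG] at hn
    rw [memJ]
    show gp ((n⁻¹ + b)⁻¹ * b) ∈ H
    have hvarg : neg (gp (n⁻¹ + b)) + gp b
        = neg (gp b) + neg (gp n⁻¹) + gp b := by
      rw [gp_add, neg_add_rev' (gp_mem_G n⁻¹) (gp_mem_G b)]
    have harg : neg (gp (n⁻¹ + b)) + gp b ∈ H := by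
      rw [hvarg]
      have h2 : neg (gp b) + neg (gp n⁻¹) + gp b
          = neg (gp b) + neg (gp n⁻¹) + neg (neg (gp b)) := by
        rw [neg_neg' (gp_mem_G b)]
      rw [h2]
      exact hnorm _ (neg_mem_addClosure (hginvH hn)) _ (neg_mem_G (gp b))
    rw [gp_mul, gp_inv, ← mu_add]
    exact hmu _ harg _
  · -- lam condition
    intro g hg e he
    rw [memJ]
    show gp (lam g e) ∈ H
    rw [gp_lam, E_gp he.2, mu_one]
    exact h1H

lemma rightSeries_antitone (B : Type*) [LeftSemiBrace B] :
    ∀ n, rightSeries B (n + 1) ⊆ rightSeries B n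
  | 0 => Set.subset_univ _
  | (n + 1) => addE_mono (dotSet_mono_left (rightSeries_antitone B n))


/-- `B^(n)` is an ideal of `B` for every positive integer `n`
(here `rightSeries B n = B^(n+1)`). -/
theorem rightSeries_isIdeal (B : Type*) [LeftSemiBrace B] (n : ℕ) :
    IsIdeal (rightSeries B n) := by
  induction n with
  | zero => exact isIdeal_univ
  | succ n ih => exact isIdeal_step ih (rightSeries_antitone B n)

end LeftSemiBrace
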